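/- arXiv:2605.07979 — 9 statements merged into one kernel-verified Lean document; each statement's English description precedes it below -/
import Mathlib

section
/- Let μ(X) have a continuous strictly increasing CDF F with density f > 0 on [0,1], and let α ∈ (0,β), β ∈ (0,1) with α+β < 1. Define the map h(q_b) = ∫_{q_a(q_b)}^{q_b} μ dF(μ) + 1 − F(q_b), where q_a(q_b) = F^{-1}(F(q_b) − α). Then h is strictly decreasing in q_b on the set where F(q_b) ≥ α, so the equation h(q_b) = β has at most one solution. -/
/-!
Moving the upper threshold from `q₁` to `q₂ > q₁` slides the screening band `[q_a, q_b]` to the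
right. The units in `[q₁, q₂]` switch from direct to screened allocation, which changes their cost
from `F q₂ - F q₁` to `∫_{q₁}^{q₂} μ dF`, no more since `μ ≤ 1`; the units in the lower increment
`[q_a(q₁), q_a(q₂)]` drop out of the band, saving `∫ μ dF > 0` over an interval of positive length.
So the budget strictly decreases, and a strictly monotone map takes each value at most once.
-/

open Set MeasureTheory intervalIntegral

section IntervalIntegral

variable {F f : ℝ → ℝ} {a b : ℝ}

theorem integrableOn_Icc_of_hasDerivAt_of_nonneg (hF : ∀ x ∈ Icc a b, HasDerivAt F (f x) x)
    (hf : ∀ x ∈ Icc a b, 0 ≤ f x) : IntegrableOn f (Icc a b) :=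
  (integrableOn_Icc_iff_integrableOn_Ioc).2 <|
    integrableOn_deriv_of_nonneg (fun x hx => (hF x hx).continuousAt.continuousWithinAt)
      (fun x hx => hF x (Ioo_subset_Icc_self hx)) (fun x hx => hf x (Ioo_subset_Icc_self hx))

theorem intervalIntegrable_id_mul_of_hasDerivAt_of_nonneg
    (hF : ∀ x ∈ Icc a b, HasDerivAt F (f x) x) (hf : ∀ x ∈ Icc a b, 0 ≤ f x)
    {u v : ℝ} (hu : u ∈ Icc a b) (hv : v ∈ Icc a b) :
    IntervalIntegrable (fun x => x * f x) volume u v :=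
  (((integrableOn_Icc_of_hasDerivAt_of_nonneg hF hf).continuousOn_mul continuousOn_id
    isCompact_Icc).mono_set (uIcc_subset_Icc hu hv)).intervalIntegrable

theorem integral_id_mul_le_sub (hab : a ≤ b) (hb : b ≤ 1)
    (hF : ∀ x ∈ Icc a b, HasDerivAt F (f x) x) (hf : ∀ x ∈ Icc a b, 0 ≤ f x) :
    ∫ x in a..b, x * f x ≤ F b - F a := by
  have ha : a ∈ Icc a b := left_mem_Icc.2 hab
  have hb' : b ∈ Icc a b := right_mem_Icc.2 hab
  have hfint : IntervalIntegrable f volume a b :=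
    ((integrableOn_Icc_of_hasDerivAt_of_nonneg hF hf).mono_set
      (uIcc_subset_Icc ha hb')).intervalIntegrable
  calc ∫ x in a..b, x * f x
      ≤ ∫ x in a..b, f x :=
        integral_mono_on hab
          (intervalIntegrable_id_mul_of_hasDerivAt_of_nonneg hF hf ha hb') hfint
          fun x hx => mul_le_of_le_one_left (hf x hx) (hx.2.trans hb)
    _ = F b - F a :=
        integral_eq_sub_of_hasDerivAt (by rwa [uIcc_of_le hab]) hfint

theorem integral_id_mul_pos (ha : 0 ≤ a) (hab : a < b)
    (hF : ∀ x ∈ Icc a b, HasDerivAt F (f x) x) (hf : ∀ x ∈ Icc a b, 0 < f x) :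
    0 < ∫ x in a..b, x * f x :=
  intervalIntegral_pos_of_pos_on
    (intervalIntegrable_id_mul_of_hasDerivAt_of_nonneg hF (fun x hx => (hf x hx).le)
      (left_mem_Icc.2 hab.le) (right_mem_Icc.2 hab.le))
    (fun x hx => mul_pos (ha.trans_lt hx.1) (hf x (Ioo_subset_Icc_self hx))) hab

end IntervalIntegral

theorem integral_band_sub_integral_band_lt {F f : ℝ → ℝ}
    (hF : ∀ x ∈ Icc (0 : ℝ) 1, HasDerivAt F (f x) x) (hf : ∀ x ∈ Icc (0 : ℝ) 1, 0 < f x)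
    {a₁ a₂ q₁ q₂ : ℝ} (ha₁ : a₁ ∈ Icc (0 : ℝ) 1) (ha₂ : a₂ ∈ Icc (0 : ℝ) 1)
    (hq₁ : q₁ ∈ Icc (0 : ℝ) 1) (hq₂ : q₂ ∈ Icc (0 : ℝ) 1) (ha : a₁ < a₂) (hq : q₁ ≤ q₂) :
    (∫ x in a₂..q₂, x * f x) - ∫ x in a₁..q₁, x * f x < F q₂ - F q₁ := by
  have hf₀ : ∀ x ∈ Icc (0 : ℝ) 1, 0 ≤ f x := fun x hx => (hf x hx).le
  have hupper : ∫ x in q₁..q₂, x * f x ≤ F q₂ - F q₁ :=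
    integral_id_mul_le_sub hq hq₂.2 (fun x hx => hF x (Icc_subset_Icc hq₁.1 hq₂.2 hx))
      fun x hx => hf₀ x (Icc_subset_Icc hq₁.1 hq₂.2 hx)
  have hlower : 0 < ∫ x in a₁..a₂, x * f x :=
    integral_id_mul_pos ha₁.1 ha (fun x hx => hF x (Icc_subset_Icc ha₁.1 ha₂.2 hx))
      fun x hx => hf x (Icc_subset_Icc ha₁.1 ha₂.2 hx)
  rw [integral_interval_sub_interval_comm'
    (intervalIntegrable_id_mul_of_hasDerivAt_of_nonneg hF hf₀ ha₂ hq₂)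
    (intervalIntegrable_id_mul_of_hasDerivAt_of_nonneg hF hf₀ ha₁ hq₁)
    (intervalIntegrable_id_mul_of_hasDerivAt_of_nonneg hF hf₀ ha₂ ha₁)]
  linarith

theorem budget_map_strict_anti_general
    (F Finv f : ℝ → ℝ) (α β : ℝ)
    (hα : 0 < α)
    (hF1 : F 1 = 1)
    (hFderiv : ∀ x ∈ Set.Icc (0:ℝ) 1, HasDerivAt F (f x) x)
    (hfpos : ∀ x ∈ Set.Icc (0:ℝ) 1, 0 < f x)
    (hFmono : StrictMonoOn F (Set.Icc (0:ℝ) 1))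
    (hFinv : ∀ p ∈ Set.Icc (0:ℝ) 1, F (Finv p) = p ∧ Finv p ∈ Set.Icc (0:ℝ) 1) :
    StrictAntiOn (fun q => (∫ μ in (Finv (F q - α))..q, μ * f μ) + 1 - F q)
      {q | q ∈ Set.Icc (0:ℝ) 1 ∧ α ≤ F q} ∧
    ∀ q₁ ∈ {q | q ∈ Set.Icc (0:ℝ) 1 ∧ α ≤ F q},
      ∀ q₂ ∈ {q | q ∈ Set.Icc (0:ℝ) 1 ∧ α ≤ F q},
        ((∫ μ in (Finv (F q₁ - α))..q₁, μ * f μ) + 1 - F q₁ = β) →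
        ((∫ μ in (Finv (F q₂ - α))..q₂, μ * f μ) + 1 - F q₂ = β) → q₁ = q₂ := by
  have hlowerThreshold : ∀ q ∈ Icc (0 : ℝ) 1, α ≤ F q →
      F (Finv (F q - α)) = F q - α ∧ Finv (F q - α) ∈ Icc (0 : ℝ) 1 := fun q hq hαq =>
    have hFq : F q ≤ 1 := hF1 ▸ hFmono.monotoneOn hq (right_mem_Icc.2 zero_le_one) hq.2
    hFinv _ ⟨by linarith, by linarith⟩
  have hanti : StrictAntiOn (fun q => (∫ μ in (Finv (F q - α))..q, μ * f μ) + 1 - F q)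
      {q | q ∈ Icc (0 : ℝ) 1 ∧ α ≤ F q} := by
    rintro q₁ ⟨hq₁, hαq₁⟩ q₂ ⟨hq₂, hαq₂⟩ hlt
    obtain ⟨hFa₁, ha₁⟩ := hlowerThreshold q₁ hq₁ hαq₁
    obtain ⟨hFa₂, ha₂⟩ := hlowerThreshold q₂ hq₂ hαq₂
    have ha : Finv (F q₁ - α) < Finv (F q₂ - α) := by
      rw [← hFmono.lt_iff_lt ha₁ ha₂, hFa₁, hFa₂]
      linarith [hFmono hq₁ hq₂ hlt]
    have hband := integral_band_sub_integral_band_lt hFderiv hfpos ha₁ ha₂ hq₁ hq₂ ha hlt.le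
    dsimp only
    linarith
  exact ⟨hanti, fun q₁ hq₁ q₂ hq₂ h₁ h₂ => hanti.injOn hq₁ hq₂ (h₁.trans h₂.symm)⟩

/-- Strict monotonicity of the budget map `h(q_b) = ∫_{q_a(q_b)}^{q_b} μ dF + 1 - F(q_b)`,
where `q_a(q_b) = F⁻¹(F(q_b) - α)`: `h` is strictly decreasing on `{q ∈ [0,1] : F(q) ≥ α}`,
hence `h(q_b) = β` has at most one solution there. -/
theorem budget_map_strict_anti
    (F Finv f : ℝ → ℝ) (α β : ℝ)
    (hα : 0 < α) (hαβ : α < β) (hβ : β < 1) (hsum : α + β < 1)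
    (hF0 : F 0 = 0) (hF1 : F 1 = 1)
    (hFderiv : ∀ x ∈ Set.Icc (0:ℝ) 1, HasDerivAt F (f x) x)
    (hfpos : ∀ x ∈ Set.Icc (0:ℝ) 1, 0 < f x)
    (hFmono : StrictMonoOn F (Set.Icc (0:ℝ) 1))
    (hFinv : ∀ p ∈ Set.Icc (0:ℝ) 1, F (Finv p) = p ∧ Finv p ∈ Set.Icc (0:ℝ) 1) :
    StrictAntiOn (fun q => (∫ μ in (Finv (F q - α))..q, μ * f μ) + 1 - F q)
      {q | q ∈ Set.Icc (0:ℝ) 1 ∧ α ≤ F q} ∧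
    ∀ q₁ ∈ {q | q ∈ Set.Icc (0:ℝ) 1 ∧ α ≤ F q},
      ∀ q₂ ∈ {q | q ∈ Set.Icc (0:ℝ) 1 ∧ α ≤ F q},
        ((∫ μ in (Finv (F q₁ - α))..q₁, μ * f μ) + 1 - F q₁ = β) →
        ((∫ μ in (Finv (F q₂ - α))..q₂, μ * f μ) + 1 - F q₂ = β) → q₁ = q₂ :=
  budget_map_strict_anti_general F Finv f α β hα hF1 hFderiv hfpos hFmono hFinv
end

section
/- For μ ~ Uniform[0,1] with thresholds q_β(α) = (1−β−α²/2)/(1−α) and q_α(α) = q_β(α) − α, the map α ↦ q_β(α) is strictly increasing and the map α ↦ q_α(α) is strictly decreasing on (0, β), provided β ∈ (0,1) and α+β < 1. -/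
/-!
In the variable `t = 1 - α` both thresholds are affine images of `f_c(t) = t / 2 + c / t`:
`q_β = 1 - f_{β - 1/2}(t)` and `q_α = f_{1/2 - β}(t)`. The map `f_c` increases on pairs `t < s`
with `2c < t s`, and on the admissible range `t > max β (1 - β)` this holds for both values of `c`
because `β² ≥ 2β - 1` and `(1 - β)² ≥ 1 - 2β`.
-/

lemma half_add_div_lt_half_add_div {c t s : ℝ} (ht : 0 < t) (hts : t < s) (hc : 2 * c < t * s) :
    t / 2 + c / t < s / 2 + c / s := by
  have hs : 0 < s := ht.trans hts
  have hdiff : s / 2 + c / s - (t / 2 + c / t) = (s - t) * (t * s - 2 * c) / (2 * t * s) := by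
    field_simp
    ring
  rw [← sub_pos, hdiff]
  have := sub_pos.mpr hts
  have := sub_pos.mpr hc
  positivity

lemma uniform_upper_threshold_eq (β : ℝ) {a : ℝ} (ha : a ≠ 1) :
    (1 - β - a ^ 2 / 2) / (1 - a) = 1 - ((1 - a) / 2 + (β - 1 / 2) / (1 - a)) := by
  have : 1 - a ≠ 0 := sub_ne_zero.mpr ha.symm
  field_simp
  ring

lemma uniform_lower_threshold_eq (β : ℝ) {a : ℝ} (ha : a ≠ 1) :
    (1 - β - a ^ 2 / 2) / (1 - a) - a = (1 - a) / 2 + (1 / 2 - β) / (1 - a) := by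
  have : 1 - a ≠ 0 := sub_ne_zero.mpr ha.symm
  field_simp
  ring

theorem uniform_thresholds_monotone_general
    (β : ℝ) :
    StrictMonoOn (fun a : ℝ => (1 - β - a ^ 2 / 2) / (1 - a))
      {a : ℝ | 0 < a ∧ a < β ∧ a + β < 1} ∧
    StrictAntiOn (fun a : ℝ => (1 - β - a ^ 2 / 2) / (1 - a) - a)
      {a : ℝ | 0 < a ∧ a < β ∧ a + β < 1} := by
  constructor
  · rintro a ⟨ha0, haβ, haβ1⟩ b ⟨-, -, hbβ1⟩ hab
    simp only [uniform_upper_threshold_eq β (by linarith : a ≠ 1),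
      uniform_upper_threshold_eq β (by linarith : b ≠ 1)]
    refine sub_lt_sub_left (half_add_div_lt_half_add_div (by linarith) (by linarith) ?_) 1
    nlinarith [sq_nonneg (β - 1), mul_lt_mul'' (by linarith : β < 1 - b) (by linarith : β < 1 - a)
      (by linarith) (by linarith)]
  · rintro a ⟨-, haβ, -⟩ b ⟨hb0, hbβ, hbβ1⟩ hab
    simp only [uniform_lower_threshold_eq β (by linarith : a ≠ 1),
      uniform_lower_threshold_eq β (by linarith : b ≠ 1)]
    refine half_add_div_lt_half_add_div (by linarith) (by linarith) ?_
    nlinarith [mul_lt_mul'' (by linarith : 1 - β < 1 - b) (by linarith : 1 - β < 1 - a)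
      (by linarith) (by linarith)]

/-- For uniform risk, the optimal upper threshold `q_β(α) = (1-β-α²/2)/(1-α)` is
strictly increasing and the lower threshold `q_α(α) = q_β(α) - α` is strictly
decreasing in the screening budget `α`, on `{α : 0 < α < β, α + β < 1}`. -/
theorem uniform_thresholds_monotone
    (β : ℝ) (hβ0 : 0 < β) (hβ1 : β < 1) :
    StrictMonoOn (fun a : ℝ => (1 - β - a ^ 2 / 2) / (1 - a))
      {a : ℝ | 0 < a ∧ a < β ∧ a + β < 1} ∧
    StrictAntiOn (fun a : ℝ => (1 - β - a ^ 2 / 2) / (1 - a) - a)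
      {a : ℝ | 0 < a ∧ a < β ∧ a + β < 1} :=
  uniform_thresholds_monotone_general β
end

section
/- Let q_α, q_β be differentiable functions of α with 0 < q_α(α) ≤ q_β(α) < 1 satisfying the implicit budget constraints F(q_β) − F(q_α) = α and ∫_{q_α}^{q_β} μ f(μ)dμ + 1 − F(q_β) = β, where F is a C¹ CDF with density f > 0. Then dq_β/dα = q_α / (f(q_β)(1 − q_β + q_α)) > 0 and dq_α/dα = (q_β − 1)/(f(q_α)(1 − q_β + q_α)) < 0. -/
/-!
Differentiating the two budget constraints in `α` (the moment integral by the Leibniz rule for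
variable endpoints) gives the linear system `f(q_β) q_β' - f(q_α) q_α' = 1` and
`(q_β - 1) f(q_β) q_β' = q_α f(q_α) q_α'` in `q_α', q_β'`. Its determinant is
`-f(q_α) f(q_β) (1 - q_β + q_α)`, nonzero since `q_β < 1` and `q_α > 0`, and Cramer's rule
gives the stated derivatives, whose signs are read off the same inequalities.
-/

open Set Filter Topology

theorem HasDerivAt.intervalIntegral_comp {g p q : ℝ → ℝ} {l r p' q' a : ℝ}
    (hg : ContinuousOn g (Icc l r)) (hp : HasDerivAt p p' a) (hq : HasDerivAt q q' a)
    (hpI : p a ∈ Ioo l r) (hqI : q a ∈ Ioo l r) :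
    HasDerivAt (fun α => ∫ t in (p α)..(q α), g t) (g (q a) * q' - g (p a) * p') a := by
  have hcont : ∀ x ∈ Ioo l r, ContinuousAt g x := fun x hx =>
    hg.continuousAt (Icc_mem_nhds hx.1 hx.2)
  have hmeas : ∀ x ∈ Ioo l r, StronglyMeasurableAtFilter g (𝓝 x) := fun x hx =>
    (hg.mono Ioo_subset_Icc_self).stronglyMeasurableAtFilter isOpen_Ioo x hx
  have hint : IntervalIntegrable g MeasureTheory.volume (p a) (q a) :=
    (hg.mono (uIcc_subset_Icc (Ioo_subset_Icc_self hpI)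
      (Ioo_subset_Icc_self hqI))).intervalIntegrable
  refine ((intervalIntegral.integral_hasFDerivAt hint (hmeas _ hpI) (hmeas _ hqI)
    (hcont _ hpI) (hcont _ hqI)).comp_hasDerivAt a (hp.prodMk hq)).congr_deriv ?_
  simp only [sub_apply, ContinuousLinearMap.smulRight_apply, ContinuousLinearMap.coe_snd',
    ContinuousLinearMap.coe_fst', smul_eq_mul]
  ring

theorem HasDerivAt.eq_of_eqOn {φ ψ : ℝ → ℝ} {s : Set ℝ} {a φ' ψ' : ℝ} (hs : IsOpen s)
    (ha : a ∈ s) (h : EqOn φ ψ s) (hφ : HasDerivAt φ φ' a) (hψ : HasDerivAt ψ ψ' a) :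
    φ' = ψ' :=
  hφ.unique (hψ.congr_of_eventuallyEq (eventuallyEq_of_mem (hs.mem_nhds ha) h))

theorem budget_system_solution {A B x y u v : ℝ} (hA : 0 < A) (hB : 0 < B) (hx : 0 < x)
    (hy : y < 1) (h₁ : A * u - B * v = 1) (h₂ : y * A * u - x * B * v - A * u = 0) :
    u = x / (A * (1 - y + x)) ∧ 0 < u ∧ v = (y - 1) / (B * (1 - y + x)) ∧ v < 0 := by
  have hD : 0 < 1 - y + x := by linarith
  have hu : u = x / (A * (1 - y + x)) := by
    rw [eq_div_iff (by positivity)]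
    linear_combination x * h₁ - h₂
  have hv : v = (y - 1) / (B * (1 - y + x)) := by
    rw [eq_div_iff (by positivity)]
    linear_combination (y - 1) * h₁ - h₂
  exact ⟨hu, hu ▸ by positivity, hv,
    hv ▸ div_neg_of_neg_of_pos (by linarith) (by positivity)⟩

theorem threshold_derivatives_general
    (F f : ℝ → ℝ) (β : ℝ) (qa qb : ℝ → ℝ) (s : Set ℝ) (hs : IsOpen s)
    (hFderiv : ∀ x ∈ Set.Icc (0:ℝ) 1, HasDerivAt F (f x) x)
    (hfcont : ContinuousOn f (Set.Icc (0:ℝ) 1))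
    (hfpos : ∀ x ∈ Set.Icc (0:ℝ) 1, 0 < f x)
    (hq : ∀ a ∈ s, 0 < qa a ∧ qa a ≤ qb a ∧ qb a < 1)
    (hc1 : ∀ a ∈ s, F (qb a) - F (qa a) = a)
    (hc2 : ∀ a ∈ s, (∫ μ in (qa a)..(qb a), μ * f μ) + 1 - F (qb a) = β)
    (hqa : DifferentiableOn ℝ qa s) (hqb : DifferentiableOn ℝ qb s) :
    ∀ a ∈ s,
      deriv qb a = qa a / (f (qb a) * (1 - qb a + qa a)) ∧ 0 < deriv qb a ∧
      deriv qa a = (qb a - 1) / (f (qa a) * (1 - qb a + qa a)) ∧ deriv qa a < 0 := by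
  intro a ha
  obtain ⟨hqa0, hqab, hqb1⟩ := hq a ha
  have hqaI : qa a ∈ Ioo (0:ℝ) 1 := ⟨hqa0, hqab.trans_lt hqb1⟩
  have hqbI : qb a ∈ Ioo (0:ℝ) 1 := ⟨hqa0.trans_le hqab, hqb1⟩
  have hqa' := (hqa.differentiableAt (hs.mem_nhds ha)).hasDerivAt
  have hqb' := (hqb.differentiableAt (hs.mem_nhds ha)).hasDerivAt
  have hFqa := (hFderiv _ (Ioo_subset_Icc_self hqaI)).comp a hqa'
  have hFqb := (hFderiv _ (Ioo_subset_Icc_self hqbI)).comp a hqb'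
  have hmoment := HasDerivAt.intervalIntegral_comp (g := fun μ => μ * f μ)
    (continuousOn_id.mul hfcont) hqa' hqb' hqaI hqbI
  have h₁ := HasDerivAt.eq_of_eqOn hs ha hc1 (hFqb.sub hFqa) (hasDerivAt_id a)
  have h₂ := HasDerivAt.eq_of_eqOn hs ha hc2 ((hmoment.add_const 1).sub hFqb)
    (hasDerivAt_const a β)
  exact budget_system_solution (hfpos _ (Ioo_subset_Icc_self hqbI))
    (hfpos _ (Ioo_subset_Icc_self hqaI)) hqa0 hqb1 h₁ (by linear_combination h₂)

/-- Implicit derivatives of the optimal screening thresholds: if `q_α(α), q_β(α)` are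
differentiable and satisfy the budget constraints `F(q_β) - F(q_α) = α` and
`∫_{q_α}^{q_β} μ f(μ) dμ + 1 - F(q_β) = β` with `0 < q_α ≤ q_β < 1`, `F` a C¹ CDF
with density `f > 0`, then `q_β' = q_α/(f(q_β)(1 - q_β + q_α)) > 0` and
`q_α' = (q_β - 1)/(f(q_α)(1 - q_β + q_α)) < 0`. -/
theorem threshold_derivatives
    (F f : ℝ → ℝ) (β : ℝ) (qa qb : ℝ → ℝ) (s : Set ℝ) (hs : IsOpen s)
    (hFderiv : ∀ x ∈ Set.Icc (0:ℝ) 1, HasDerivAt F (f x) x)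
    (hfcont : ContinuousOn f (Set.Icc (0:ℝ) 1))
    (hfpos : ∀ x ∈ Set.Icc (0:ℝ) 1, 0 < f x)
    (hF0 : F 0 = 0) (hF1 : F 1 = 1)
    (hq : ∀ a ∈ s, 0 < qa a ∧ qa a ≤ qb a ∧ qb a < 1)
    (hc1 : ∀ a ∈ s, F (qb a) - F (qa a) = a)
    (hc2 : ∀ a ∈ s, (∫ μ in (qa a)..(qb a), μ * f μ) + 1 - F (qb a) = β)
    (hqa : DifferentiableOn ℝ qa s) (hqb : DifferentiableOn ℝ qb s) :
    ∀ a ∈ s,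
      deriv qb a = qa a / (f (qb a) * (1 - qb a + qa a)) ∧ 0 < deriv qb a ∧
      deriv qa a = (qb a - 1) / (f (qa a) * (1 - qb a + qa a)) ∧ deriv qa a < 0 :=
  threshold_derivatives_general F f β qa qb s hs hFderiv hfcont hfpos hq hc1 hc2 hqa hqb
end

section
/- Define V*(α) = ∫_{q_α(α)}^1 μ f(μ) dμ where q_α(α), q_β(α) satisfy the budget constraints F(q_β) − F(q_α) = α and ∫_{q_α}^{q_β} μ f(μ)dμ + 1 − F(q_β) = β, with F a C¹ CDF with density f > 0 on [0,1] and 0 < q_α ≤ q_β < 1. Then dV*/dα = q_α(1 − q_β)/(1 − q_β + q_α) > 0. -/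
/-!
Differentiating the two budget constraints in `α` gives a linear system for
`x = f(q_α) q_α'` and `y = f(q_β) q_β'`, namely `y - x = 1` and `q_β y - q_α x - y = 0`.
Its solution is `x = -(1 - q_β) / (1 - q_β + q_α)`, and by the Leibniz rule
`dV*/dα = -q_α f(q_α) q_α' = -q_α x`.
-/

open Set Filter Topology intervalIntegral

section IntegralWithVariableLimits

variable {g u v : ℝ → ℝ} {l r a b u' v' : ℝ}

theorem hasDerivAt_integral_comp_right (hg : ContinuousOn g (Icc l r)) (hb : b ∈ Icc l r)
    (hu : HasDerivAt u u' a) (hua : u a ∈ Ioo l r) :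
    HasDerivAt (fun x => ∫ μ in b..u x, g μ) (g (u a) * u') a := by
  have hnhds : Icc l r ∈ 𝓝 (u a) := Icc_mem_nhds hua.1 hua.2
  have hprimitive : HasDerivAt (fun y => ∫ μ in b..y, g μ) (g (u a)) (u a) :=
    integral_hasDerivAt_right
      ((hg.mono (uIcc_subset_Icc hb (Ioo_subset_Icc_self hua))).intervalIntegrable)
      (hg.stronglyMeasurableAtFilter_nhdsWithin measurableSet_Icc (u a)
        |>.filter_mono (le_of_eq (nhdsWithin_eq_nhds.mpr hnhds).symm))
      (hg.continuousAt hnhds)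
  exact hprimitive.comp a hu

theorem hasDerivAt_integral_comp_left (hg : ContinuousOn g (Icc l r)) (hb : b ∈ Icc l r)
    (hu : HasDerivAt u u' a) (hua : u a ∈ Ioo l r) :
    HasDerivAt (fun x => ∫ μ in u x..b, g μ) (-(g (u a) * u')) a := by
  simp only [integral_symm b]
  exact (hasDerivAt_integral_comp_right hg hb hu hua).fun_neg

theorem hasDerivAt_integral_comp_limits (hg : ContinuousOn g (Icc l r))
    (hu : HasDerivAt u u' a) (hv : HasDerivAt v v' a)
    (hua : u a ∈ Ioo l r) (hva : v a ∈ Ioo l r) :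
    HasDerivAt (fun x => ∫ μ in u x..v x, g μ) (g (v a) * v' - g (u a) * u') a := by
  have hl : l ∈ Icc l r := left_mem_Icc.mpr (hua.1.trans hua.2).le
  have hsplit : (fun x => ∫ μ in l..v x, g μ) - (fun x => ∫ μ in l..u x, g μ)
      =ᶠ[𝓝 a] fun x => ∫ μ in u x..v x, g μ := by
    filter_upwards [hu.continuousAt.preimage_mem_nhds (Icc_mem_nhds hua.1 hua.2),
      hv.continuousAt.preimage_mem_nhds (Icc_mem_nhds hva.1 hva.2)] with x hux hvx
    exact integral_interval_sub_left
      (hg.mono (uIcc_subset_Icc hl hvx)).intervalIntegrable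
      (hg.mono (uIcc_subset_Icc hl hux)).intervalIntegrable
  exact ((hasDerivAt_integral_comp_right hg hl hv hva).sub
    (hasDerivAt_integral_comp_right hg hl hu hua)).congr_of_eventuallyEq hsplit.symm

end IntegralWithVariableLimits

theorem marginal_value_of_screening_general
    (F f : ℝ → ℝ) (β : ℝ) (qa qb : ℝ → ℝ) (s : Set ℝ) (hs : IsOpen s)
    (hFderiv : ∀ x ∈ Set.Icc (0:ℝ) 1, HasDerivAt F (f x) x)
    (hfcont : ContinuousOn f (Set.Icc (0:ℝ) 1))
    (hq : ∀ a ∈ s, 0 < qa a ∧ qa a ≤ qb a ∧ qb a < 1)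
    (hc1 : ∀ a ∈ s, F (qb a) - F (qa a) = a)
    (hc2 : ∀ a ∈ s, (∫ μ in (qa a)..(qb a), μ * f μ) + 1 - F (qb a) = β)
    (hqa : DifferentiableOn ℝ qa s) (hqb : DifferentiableOn ℝ qb s) :
    ∀ a ∈ s,
      HasDerivAt (fun a => ∫ μ in (qa a)..1, μ * f μ)
        (qa a * (1 - qb a) / (1 - qb a + qa a)) a ∧
      0 < qa a * (1 - qb a) / (1 - qb a + qa a) := by
  intro a ha
  obtain ⟨hqa0, hqab, hqb1⟩ := hq a ha
  have hqaIoo : qa a ∈ Ioo (0:ℝ) 1 := ⟨hqa0, hqab.trans_lt hqb1⟩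
  have hqbIoo : qb a ∈ Ioo (0:ℝ) 1 := ⟨hqa0.trans_le hqab, hqb1⟩
  have hg : ContinuousOn (fun μ => μ * f μ) (Icc 0 1) := continuousOn_id.mul hfcont
  have hda := (hqa.differentiableAt (hs.mem_nhds ha)).hasDerivAt
  have hdb := (hqb.differentiableAt (hs.mem_nhds ha)).hasDerivAt
  have hbudget1 : f (qb a) * deriv qb a - f (qa a) * deriv qa a = 1 :=
    (((hFderiv _ (Ioo_subset_Icc_self hqbIoo)).comp a hdb).sub
      ((hFderiv _ (Ioo_subset_Icc_self hqaIoo)).comp a hda)).unique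
      ((hasDerivAt_id a).congr_of_eventuallyEq (eventually_of_mem (hs.mem_nhds ha) hc1))
  have hbudget2 : qb a * f (qb a) * deriv qb a - qa a * f (qa a) * deriv qa a
      - f (qb a) * deriv qb a = 0 :=
    (((hasDerivAt_integral_comp_limits hg hda hdb hqaIoo hqbIoo).add_const 1).sub
      ((hFderiv _ (Ioo_subset_Icc_self hqbIoo)).comp a hdb)).unique
      ((hasDerivAt_const a β).congr_of_eventuallyEq (eventually_of_mem (hs.mem_nhds ha) hc2))
  have hD : 0 < 1 - qb a + qa a := by linarith
  have hvalue : -(qa a * f (qa a) * deriv qa a) = qa a * (1 - qb a) / (1 - qb a + qa a) := by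
    rw [eq_div_iff hD.ne']
    linear_combination (qa a * (1 - qb a)) * hbudget1 + qa a * hbudget2
  refine ⟨?_, div_pos (mul_pos hqa0 (by linarith)) hD⟩
  rw [← hvalue]
  exact hasDerivAt_integral_comp_left hg (right_mem_Icc.mpr zero_le_one) hda hqaIoo

/-- Marginal value of screening: with `V*(α) = ∫_{q_α(α)}^1 μ f(μ) dμ` and
`q_α(α), q_β(α)` satisfying the budget constraints, the derivative is
`dV*/dα = q_α(1 - q_β)/(1 - q_β + q_α) > 0`. -/
theorem marginal_value_of_screening
    (F f : ℝ → ℝ) (β : ℝ) (qa qb : ℝ → ℝ) (s : Set ℝ) (hs : IsOpen s)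
    (hFderiv : ∀ x ∈ Set.Icc (0:ℝ) 1, HasDerivAt F (f x) x)
    (hfcont : ContinuousOn f (Set.Icc (0:ℝ) 1))
    (hfpos : ∀ x ∈ Set.Icc (0:ℝ) 1, 0 < f x)
    (hF0 : F 0 = 0) (hF1 : F 1 = 1)
    (hq : ∀ a ∈ s, 0 < qa a ∧ qa a ≤ qb a ∧ qb a < 1)
    (hc1 : ∀ a ∈ s, F (qb a) - F (qa a) = a)
    (hc2 : ∀ a ∈ s, (∫ μ in (qa a)..(qb a), μ * f μ) + 1 - F (qb a) = β)
    (hqa : DifferentiableOn ℝ qa s) (hqb : DifferentiableOn ℝ qb s) :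
    ∀ a ∈ s,
      HasDerivAt (fun a => ∫ μ in (qa a)..1, μ * f μ)
        (qa a * (1 - qb a) / (1 - qb a + qa a)) a ∧
      0 < qa a * (1 - qb a) / (1 - qb a + qa a) :=
  marginal_value_of_screening_general F f β qa qb s hs hFderiv hfcont hq hc1 hc2 hqa hqb
end

section
/- With the same setup, the second derivative satisfies d²V*/dα² = −[(1−q_β)³ f(q_β) + q_α³ f(q_α)] / [f(q_α) f(q_β) (1 − q_β + q_α)³] < 0, hence V*(α) is strictly concave in α. -/
/-!
Differentiating the two budget constraints in `α` gives a linear system for `q_α'` and `q_β'`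
whose solution is `q_α' = (q_β - 1) / (f(q_α) D)`, `q_β' = q_α / (f(q_β) D)`, where
`D = 1 - q_β + q_α`. By the fundamental theorem of calculus `V*' = -q_α f(q_α) q_α'`, which is
`q_α (1 - q_β) / D`; differentiating this quotient once more with the same values of `q_α'` and
`q_β'` gives the second derivative, negative since `0 < q_α`, `q_β < 1` and `f > 0`.
-/

open Set Filter Topology intervalIntegral

theorem hasDerivAt_integral_left_of_continuousOn {g : ℝ → ℝ} {a b x : ℝ}
    (hg : ContinuousOn g (Icc a b)) (hx : x ∈ Ioo a b) :
    HasDerivAt (fun u => ∫ t in u..b, g t) (-g x) x :=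
  integral_hasDerivAt_left
    (hg.mono (uIcc_subset_Icc (Ioo_subset_Icc_self hx)
      (right_mem_Icc.mpr (hx.1.trans hx.2).le))).intervalIntegrable
    ((hg.mono Ioo_subset_Icc_self).stronglyMeasurableAtFilter isOpen_Ioo x hx)
    ((hg x (Ioo_subset_Icc_self hx)).continuousAt (Icc_mem_nhds hx.1 hx.2))

theorem integral_eq_sub_integral_of_continuousOn {g : ℝ → ℝ} {a b x y : ℝ}
    (hg : ContinuousOn g (Icc a b)) (hx : x ∈ Icc a b) (hy : y ∈ Icc a b) :
    ∫ t in x..y, g t = (∫ t in x..b, g t) - ∫ t in y..b, g t := by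
  have hb : b ∈ Icc a b := right_mem_Icc.mpr (hx.1.trans hx.2)
  exact eq_sub_of_add_eq <| integral_add_adjacent_intervals
    (hg.mono (uIcc_subset_Icc hx hy)).intervalIntegrable
    (hg.mono (uIcc_subset_Icc hy hb)).intervalIntegrable

/-- `P` stands for `u ↦ ∫_u^1 μ f(μ) dμ`, so that `hc2` is the second budget constraint. -/
theorem quantile_derivs_of_budget_constraints {F f P qa qb : ℝ → ℝ} {β a qa' qb' : ℝ}
    (hqa : HasDerivAt qa qa' a) (hqb : HasDerivAt qb qb' a)
    (hFa : HasDerivAt F (f (qa a)) (qa a)) (hFb : HasDerivAt F (f (qb a)) (qb a))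
    (hPa : HasDerivAt P (-(qa a * f (qa a))) (qa a))
    (hPb : HasDerivAt P (-(qb a * f (qb a))) (qb a))
    (hc1 : ∀ᶠ b in 𝓝 a, F (qb b) - F (qa b) = b)
    (hc2 : ∀ᶠ b in 𝓝 a, P (qa b) - P (qb b) + 1 - F (qb b) = β)
    (hfa : f (qa a) ≠ 0) (hfb : f (qb a) ≠ 0) (hD : 1 - qb a + qa a ≠ 0) :
    qa' = (qb a - 1) / (f (qa a) * (1 - qb a + qa a)) ∧
      qb' = qa a / (f (qb a) * (1 - qb a + qa a)) := by
  have e1 : f (qb a) * qb' - f (qa a) * qa' = 1 :=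
    ((hFb.comp a hqb).sub (hFa.comp a hqa)).unique ((hasDerivAt_id a).congr_of_eventuallyEq hc1)
  have e2 : -(qa a * f (qa a)) * qa' - -(qb a * f (qb a)) * qb' - f (qb a) * qb' = 0 :=
    ((((hPa.comp a hqa).sub (hPb.comp a hqb)).add_const 1).sub (hFb.comp a hqb)).unique
      ((hasDerivAt_const a β).congr_of_eventuallyEq hc2)
  constructor
  · field_simp
    linear_combination (qb a - 1) * e1 - e2
  · field_simp
    linear_combination qa a * e1 - e2

theorem hasDerivAt_marginal_value {qa qb : ℝ → ℝ} {a A B qa' qb' : ℝ}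
    (hqa : HasDerivAt qa qa' a) (hqb : HasDerivAt qb qb' a)
    (hqa' : qa' = (qb a - 1) / (A * (1 - qb a + qa a)))
    (hqb' : qb' = qa a / (B * (1 - qb a + qa a)))
    (hA : A ≠ 0) (hB : B ≠ 0) (hD : 1 - qb a + qa a ≠ 0) :
    HasDerivAt (fun b => qa b * (1 - qb b) / (1 - qb b + qa b))
      (-(((1 - qb a) ^ 3 * B + qa a ^ 3 * A) / (A * B * (1 - qb a + qa a) ^ 3))) a := by
  refine ((hqa.fun_mul (hqb.const_sub 1)).fun_div ((hqb.const_sub 1).fun_add hqa) hD).congr_deriv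
    ?_
  rw [hqa', hqb']
  field_simp
  ring

theorem hasDerivAt_value_of_budget_constraints {F f P qa qb : ℝ → ℝ} {β a : ℝ}
    (hqa : DifferentiableAt ℝ qa a) (hqb : DifferentiableAt ℝ qb a)
    (hF : ∀ x ∈ Icc (0:ℝ) 1, HasDerivAt F (f x) x)
    (hP : ∀ x ∈ Ioo (0:ℝ) 1, HasDerivAt P (-(x * f x)) x)
    (hfpos : ∀ x ∈ Icc (0:ℝ) 1, 0 < f x) (hq : 0 < qa a ∧ qa a ≤ qb a ∧ qb a < 1)
    (hc1 : ∀ᶠ b in 𝓝 a, F (qb b) - F (qa b) = b)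
    (hc2 : ∀ᶠ b in 𝓝 a, P (qa b) - P (qb b) + 1 - F (qb b) = β) :
    HasDerivAt (fun b => P (qa b)) (qa a * (1 - qb a) / (1 - qb a + qa a)) a ∧
      HasDerivAt (fun b => qa b * (1 - qb b) / (1 - qb b + qa b))
        (-(((1 - qb a) ^ 3 * f (qb a) + qa a ^ 3 * f (qa a))
          / (f (qa a) * f (qb a) * (1 - qb a + qa a) ^ 3))) a := by
  obtain ⟨h0, hab, h1⟩ := hq
  have hqa01 : qa a ∈ Ioo 0 1 := ⟨h0, hab.trans_lt h1⟩
  have hqb01 : qb a ∈ Ioo 0 1 := ⟨h0.trans_le hab, h1⟩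
  have hfa := (hfpos _ (Ioo_subset_Icc_self hqa01)).ne'
  have hfb := (hfpos _ (Ioo_subset_Icc_self hqb01)).ne'
  have hD : 1 - qb a + qa a ≠ 0 := by linarith
  obtain ⟨hqa', hqb'⟩ := quantile_derivs_of_budget_constraints hqa.hasDerivAt hqb.hasDerivAt
    (hF _ (Ioo_subset_Icc_self hqa01)) (hF _ (Ioo_subset_Icc_self hqb01)) (hP _ hqa01)
    (hP _ hqb01) hc1 hc2 hfa hfb hD
  refine ⟨((hP _ hqa01).comp a hqa.hasDerivAt).congr_deriv ?_,
    hasDerivAt_marginal_value hqa.hasDerivAt hqb.hasDerivAt hqa' hqb' hfa hfb hD⟩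
  rw [hqa']
  field_simp
  ring

theorem value_of_screening_concave_general
    (F f : ℝ → ℝ) (β : ℝ) (qa qb : ℝ → ℝ) (s : Set ℝ) (hs : IsOpen s)
    (hconv : Convex ℝ s)
    (hFderiv : ∀ x ∈ Set.Icc (0:ℝ) 1, HasDerivAt F (f x) x)
    (hfcont : ContinuousOn f (Set.Icc (0:ℝ) 1))
    (hfpos : ∀ x ∈ Set.Icc (0:ℝ) 1, 0 < f x)
    (hq : ∀ a ∈ s, 0 < qa a ∧ qa a ≤ qb a ∧ qb a < 1)
    (hc1 : ∀ a ∈ s, F (qb a) - F (qa a) = a)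
    (hc2 : ∀ a ∈ s, (∫ μ in (qa a)..(qb a), μ * f μ) + 1 - F (qb a) = β)
    (hqa : ContDiffOn ℝ 1 qa s) (hqb : ContDiffOn ℝ 1 qb s) :
    (∀ a ∈ s,
      deriv (deriv (fun a => ∫ μ in (qa a)..1, μ * f μ)) a
        = -(((1 - qb a) ^ 3 * f (qb a) + (qa a) ^ 3 * f (qa a))
            / (f (qa a) * f (qb a) * (1 - qb a + qa a) ^ 3)) ∧
      deriv (deriv (fun a => ∫ μ in (qa a)..1, μ * f μ)) a < 0) ∧
    StrictConcaveOn ℝ s (fun a => ∫ μ in (qa a)..1, μ * f μ) := by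
  set P : ℝ → ℝ := fun u => ∫ μ in u..1, μ * f μ
  have hmf : ContinuousOn (fun μ => μ * f μ) (Icc 0 1) := continuousOn_id.mul hfcont
  have hqI : ∀ a ∈ s, qa a ∈ Icc 0 1 ∧ qb a ∈ Icc 0 1 := fun a ha =>
    have ⟨h0, hab, h1⟩ := hq a ha
    ⟨⟨h0.le, hab.trans h1.le⟩, ⟨(h0.trans_le hab).le, h1.le⟩⟩
  have hc2' : ∀ a ∈ s, P (qa a) - P (qb a) + 1 - F (qb a) = β := fun a ha => by
    rw [← hc2 a ha, integral_eq_sub_integral_of_continuousOn hmf (hqI a ha).1 (hqI a ha).2]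
  have hderiv : ∀ a ∈ s, _ := fun a ha => hasDerivAt_value_of_budget_constraints
    (hqa.differentiableOn one_ne_zero a ha |>.differentiableAt (hs.mem_nhds ha))
    (hqb.differentiableOn one_ne_zero a ha |>.differentiableAt (hs.mem_nhds ha))
    hFderiv (fun x hx => hasDerivAt_integral_left_of_continuousOn hmf hx) hfpos (hq a ha)
    (eventually_of_mem (hs.mem_nhds ha) hc1) (eventually_of_mem (hs.mem_nhds ha) hc2')
  have hV'' : ∀ a ∈ s, deriv (deriv fun a => P (qa a)) a
      = -(((1 - qb a) ^ 3 * f (qb a) + qa a ^ 3 * f (qa a))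
          / (f (qa a) * f (qb a) * (1 - qb a + qa a) ^ 3)) := fun a ha => by
    rw [(eventuallyEq_of_mem (hs.mem_nhds ha) fun b hb => (hderiv b hb).1.deriv).deriv_eq]
    exact (hderiv a ha).2.deriv
  have hneg : ∀ a ∈ s, deriv (deriv fun a => P (qa a)) a < 0 := fun a ha => by
    obtain ⟨h0, -, h1⟩ := hq a ha
    have hfa := hfpos _ (hqI a ha).1
    have hfb := hfpos _ (hqI a ha).2
    rw [hV'' a ha]
    exact neg_neg_of_pos <| div_pos
      (add_pos (mul_pos (pow_pos (sub_pos.2 h1) 3) hfb) (mul_pos (pow_pos h0 3) hfa))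
      (mul_pos (mul_pos hfa hfb) (pow_pos (by linarith) 3))
  exact ⟨fun a ha => ⟨hV'' a ha, hneg a ha⟩, strictConcaveOn_of_deriv2_neg' hconv
    (fun a ha => (hderiv a ha).1.continuousAt.continuousWithinAt) hneg⟩

/-- Concavity of the value of screening: with `V*(α) = ∫_{q_α(α)}^1 μ f(μ) dμ`,
the second derivative is
`d²V*/dα² = -[(1-q_β)³ f(q_β) + q_α³ f(q_α)] / [f(q_α) f(q_β) (1-q_β+q_α)³] < 0`,
hence `V*` is strictly concave in the screening budget `α`. -/
theorem value_of_screening_concave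
    (F f : ℝ → ℝ) (β : ℝ) (qa qb : ℝ → ℝ) (s : Set ℝ) (hs : IsOpen s)
    (hconv : Convex ℝ s)
    (hFderiv : ∀ x ∈ Set.Icc (0:ℝ) 1, HasDerivAt F (f x) x)
    (hfcont : ContinuousOn f (Set.Icc (0:ℝ) 1))
    (hfpos : ∀ x ∈ Set.Icc (0:ℝ) 1, 0 < f x)
    (hF0 : F 0 = 0) (hF1 : F 1 = 1)
    (hq : ∀ a ∈ s, 0 < qa a ∧ qa a ≤ qb a ∧ qb a < 1)
    (hc1 : ∀ a ∈ s, F (qb a) - F (qa a) = a)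
    (hc2 : ∀ a ∈ s, (∫ μ in (qa a)..(qb a), μ * f μ) + 1 - F (qb a) = β)
    (hqa : ContDiffOn ℝ 1 qa s) (hqb : ContDiffOn ℝ 1 qb s) :
    (∀ a ∈ s,
      deriv (deriv (fun a => ∫ μ in (qa a)..1, μ * f μ)) a
        = -(((1 - qb a) ^ 3 * f (qb a) + (qa a) ^ 3 * f (qa a))
            / (f (qa a) * f (qb a) * (1 - qb a + qa a) ^ 3)) ∧
      deriv (deriv (fun a => ∫ μ in (qa a)..1, μ * f μ)) a < 0) ∧
    StrictConcaveOn ℝ s (fun a => ∫ μ in (qa a)..1, μ * f μ) :=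
  value_of_screening_concave_general F f β qa qb s hs hconv hFderiv hfcont hfpos hq hc1 hc2 hqa hqb
end

section
/- Let F be a continuous strictly increasing CDF on [0,1], α ∈ (0,β), α+β < 1. Define g(ρ) = (1/α) ∫_{q_α(ρ)}^{q_β(ρ)} μ dF(μ) with q_β(ρ) = F^{-1}(1 − β + αρ) and q_α(ρ) = F^{-1}(1 − β − α + αρ). Then for all 0 ≤ ρ₁ < ρ₂ ≤ 1, 0 ≤ g(ρ₂) − g(ρ₁) ≤ c_F (ρ₂ − ρ₁), where c_F = F^{-1}(1−β+α) − F^{-1}(1−β−α) < 1. In particular g is a monotone-increasing contraction on [0,1]. -/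
open MeasureTheory Set

/-! For `p = 1 - β - α + αρ` the band `(F⁻¹ p, F⁻¹ (p + α)]` has `F`-mass `α`. Passing from `ρ₁`
to `ρ₂` removes `(F⁻¹ p₁, F⁻¹ p₂]` and adds `(F⁻¹ (p₁ + α), F⁻¹ (p₂ + α)]`, both of mass
`α (ρ₂ - ρ₁)`. Since `p₂ ≤ p₁ + α` the bands overlap, so every added point lies to the right of
every removed one, which gives monotonicity; and all of them lie in
`[F⁻¹ (1 - β - α), F⁻¹ (1 - β + α)]`, which gives the Lipschitz constant. -/

theorem Monotone.strictMonoOn_of_rightInvOn {α β : Type*} [LinearOrder α] [Preorder β]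
    {f : α → β} {g : β → α} {t : Set β} (hf : Monotone f) (hfg : RightInvOn g f t) :
    StrictMonoOn g t := fun _ hp _ hq hpq =>
  lt_of_not_ge fun h => hpq.not_ge <| (hfg hq).symm.le.trans <| (hf h).trans (hfg hp).le

theorem mem_Ioo_of_apply_mem_Ioo {α β : Type*} [PartialOrder α] [Preorder β] {f : α → β}
    {a b x : α} (hx : x ∈ Icc a b) (hfx : f x ∈ Ioo (f a) (f b)) : x ∈ Ioo a b :=
  ⟨hx.1.lt_of_ne (by rintro rfl; exact hfx.1.false),
    hx.2.lt_of_ne' (by rintro rfl; exact hfx.2.false)⟩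

theorem StieltjesFunction.measureReal_Ioc (S : StieltjesFunction ℝ) {a b : ℝ} (hab : a ≤ b) :
    S.measure.real (Ioc a b) = S b - S a := by
  rw [measureReal_def, S.measure_Ioc, ENNReal.toReal_ofReal (sub_nonneg.2 (S.mono hab))]

section IntervalIntegralId

variable {μ : Measure ℝ} [IsLocallyFiniteMeasure μ]

theorem intervalIntegral_id_mem_Icc {u v : ℝ} (huv : u ≤ v) :
    ∫ x in u..v, x ∂μ ∈ Icc (u * μ.real (Ioc u v)) (v * μ.real (Ioc u v)) := by
  have hfin : μ (Ioc u v) ≠ ⊤ := measure_Ioc_lt_top.ne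
  have hint : IntegrableOn (fun x : ℝ => x) (Ioc u v) μ :=
    (continuous_id.intervalIntegrable u v).1
  rw [intervalIntegral.integral_of_le huv]
  refine ⟨setIntegral_ge_of_const_le_real measurableSet_Ioc hfin (fun x hx => hx.1.le) hint, ?_⟩
  calc ∫ x in Ioc u v, x ∂μ ≤ ∫ _ in Ioc u v, v ∂μ :=
        setIntegral_mono_on hint (integrableOn_const hfin) measurableSet_Ioc fun x hx => hx.2
    _ = v * μ.real (Ioc u v) := by rw [setIntegral_const, smul_eq_mul, mul_comm]

theorem intervalIntegral_id_sub_mem_Icc_of_slide {a₁ a₂ b₁ b₂ m : ℝ} (ha : a₁ ≤ a₂)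
    (hb : b₁ ≤ b₂) (hma : μ.real (Ioc a₁ a₂) = m) (hmb : μ.real (Ioc b₁ b₂) = m) :
    (∫ x in a₂..b₂, x ∂μ) - ∫ x in a₁..b₁, x ∂μ ∈ Icc ((b₁ - a₂) * m) ((b₂ - a₁) * m) := by
  have hint (u v : ℝ) : IntervalIntegrable (fun x : ℝ => x) μ u v :=
    continuous_id.intervalIntegrable u v
  have hslide : (∫ x in a₂..b₂, x ∂μ) - ∫ x in a₁..b₁, x ∂μ
      = (∫ x in b₁..b₂, x ∂μ) - ∫ x in a₁..a₂, x ∂μ := by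
    linarith [intervalIntegral.integral_add_adjacent_intervals (hint a₁ a₂) (hint a₂ b₂),
      intervalIntegral.integral_add_adjacent_intervals (hint a₁ b₁) (hint b₁ b₂)]
  obtain ⟨hb_ge, hb_le⟩ := hmb ▸ intervalIntegral_id_mem_Icc (μ := μ) hb
  obtain ⟨ha_ge, ha_le⟩ := hma ▸ intervalIntegral_id_mem_Icc (μ := μ) ha
  rw [hslide]
  constructor <;> linarith

end IntervalIntegralId

theorem StieltjesFunction.intervalIntegral_id_quantile_sub_mem_Icc (S : StieltjesFunction ℝ)
    {Q : ℝ → ℝ} {p₁ p₂ w : ℝ} (hp : p₁ ≤ p₂) (hw : 0 ≤ w)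
    (hSQ : ∀ p ∈ Icc p₁ (p₂ + w), S (Q p) = p) :
    (∫ x in Q p₂..Q (p₂ + w), x ∂S.measure) - ∫ x in Q p₁..Q (p₁ + w), x ∂S.measure ∈
      Icc ((Q (p₁ + w) - Q p₂) * (p₂ - p₁)) ((Q (p₂ + w) - Q p₁) * (p₂ - p₁)) := by
  have hQ := (S.mono.strictMonoOn_of_rightInvOn hSQ).monotoneOn
  have hmass {p q} (hp : p ∈ Icc p₁ (p₂ + w)) (hq : q ∈ Icc p₁ (p₂ + w)) (hpq : p ≤ q) :
      S.measure.real (Ioc (Q p) (Q q)) = q - p := by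
    rw [S.measureReal_Ioc (hQ hp hq hpq), hSQ p hp, hSQ q hq]
  have h₁ : p₁ ∈ Icc p₁ (p₂ + w) := ⟨le_rfl, by linarith⟩
  have h₂ : p₂ ∈ Icc p₁ (p₂ + w) := ⟨hp, by linarith⟩
  have h₁w : p₁ + w ∈ Icc p₁ (p₂ + w) := ⟨by linarith, by linarith⟩
  have h₂w : p₂ + w ∈ Icc p₁ (p₂ + w) := ⟨by linarith, le_rfl⟩
  refine intervalIntegral_id_sub_mem_Icc_of_slide (hQ h₁ h₂ hp) (hQ h₁w h₂w (by linarith))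
    (hmass h₁ h₂ hp) ?_
  rw [hmass h₁w h₂w (by linarith)]
  ring

theorem fixed_point_update_contraction_general
    (S : StieltjesFunction ℝ) (Finv : ℝ → ℝ) (α β : ℝ)
    (hα : 0 < α) (hαβ : α < β) (hsum : α + β < 1)
    (hS0 : S 0 = 0) (hS1 : S 1 = 1)
    (hFinv : ∀ p ∈ Set.Icc (0:ℝ) 1, S (Finv p) = p ∧ Finv p ∈ Set.Icc (0:ℝ) 1) :
    (Finv (1 - β + α) - Finv (1 - β - α) < 1) ∧
    ∀ ρ₁ ρ₂ : ℝ, 0 ≤ ρ₁ → ρ₁ < ρ₂ → ρ₂ ≤ 1 →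
      0 ≤ (1/α) * (∫ x in (Finv (1 - β - α + α * ρ₂))..(Finv (1 - β + α * ρ₂)), x ∂S.measure)
          - (1/α) * (∫ x in (Finv (1 - β - α + α * ρ₁))..(Finv (1 - β + α * ρ₁)), x ∂S.measure) ∧
      (1/α) * (∫ x in (Finv (1 - β - α + α * ρ₂))..(Finv (1 - β + α * ρ₂)), x ∂S.measure)
          - (1/α) * (∫ x in (Finv (1 - β - α + α * ρ₁))..(Finv (1 - β + α * ρ₁)), x ∂S.measure)
        ≤ (Finv (1 - β + α) - Finv (1 - β - α)) * (ρ₂ - ρ₁) := by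
  set band := Icc (1 - β - α) (1 - β + α)
  have hband : band ⊆ Icc 0 1 := Icc_subset_Icc (by linarith) (by linarith)
  have hSQ : ∀ p ∈ band, S (Finv p) = p := fun p hp => (hFinv p (hband hp)).1
  have hQ := (S.mono.strictMonoOn_of_rightInvOn hSQ).monotoneOn
  have hQ_mem (p : ℝ) (hp : p ∈ band) (hp' : p ∈ Ioo 0 1) : Finv p ∈ Ioo 0 1 :=
    mem_Ioo_of_apply_mem_Ioo (f := S) (hFinv p (hband hp)).2 (by rwa [hS0, hS1, hSQ p hp])
  have hQ_hi := (hQ_mem (1 - β + α) ⟨by linarith, le_rfl⟩ ⟨by linarith, by linarith⟩).2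
  have hQ_lo := (hQ_mem (1 - β - α) ⟨le_rfl, by linarith⟩ ⟨by linarith, by linarith⟩).1
  refine ⟨by linarith, fun ρ₁ ρ₂ h₁ h₁₂ h₂ => ?_⟩
  have hslide := S.intervalIntegral_id_quantile_sub_mem_Icc (Q := Finv)
    (p₁ := 1 - β - α + α * ρ₁) (p₂ := 1 - β - α + α * ρ₂) (by nlinarith) hα.le
    fun p hp => hSQ p ⟨by nlinarith [hp.1], by nlinarith [hp.2]⟩
  have hshift (ρ : ℝ) : 1 - β - α + α * ρ + α = 1 - β + α * ρ := by ring
  have hΔ : 1 - β - α + α * ρ₂ - (1 - β - α + α * ρ₁) = α * (ρ₂ - ρ₁) := by ring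
  simp only [hshift, hΔ] at hslide
  have hoverlap : Finv (1 - β - α + α * ρ₂) ≤ Finv (1 - β + α * ρ₁) :=
    hQ ⟨by nlinarith, by nlinarith⟩ ⟨by nlinarith, by nlinarith⟩ (by nlinarith)
  have hhi : Finv (1 - β + α * ρ₂) ≤ Finv (1 - β + α) :=
    hQ ⟨by nlinarith, by nlinarith⟩ ⟨by linarith, le_rfl⟩ (by nlinarith)
  have hlo : Finv (1 - β - α) ≤ Finv (1 - β - α + α * ρ₁) :=
    hQ ⟨le_rfl, by linarith⟩ ⟨by nlinarith, by nlinarith⟩ (by nlinarith)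
  rw [← mul_sub, one_div]
  constructor
  · exact mul_nonneg (inv_nonneg.2 hα.le)
      ((mul_nonneg (sub_nonneg.2 hoverlap) (by nlinarith)).trans hslide.1)
  · rw [inv_mul_le_iff₀ hα]
    calc _ ≤ (Finv (1 - β + α * ρ₂) - Finv (1 - β - α + α * ρ₁)) * (α * (ρ₂ - ρ₁)) := hslide.2
      _ ≤ (Finv (1 - β + α) - Finv (1 - β - α)) * (α * (ρ₂ - ρ₁)) := by gcongr
      _ = α * ((Finv (1 - β + α) - Finv (1 - β - α)) * (ρ₂ - ρ₁)) := by ring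

/-- The fixed-point update `g(ρ) = (1/α)∫_{q_α(ρ)}^{q_β(ρ)} μ dF(μ)`, with
`q_β(ρ) = F⁻¹(1-β+αρ)` and `q_α(ρ) = F⁻¹(1-β-α+αρ)`, is a monotone increasing
contraction on `[0,1]` with constant `c_F = F⁻¹(1-β+α) - F⁻¹(1-β-α) < 1`. -/
theorem fixed_point_update_contraction
    (S : StieltjesFunction ℝ) (Finv : ℝ → ℝ) (α β : ℝ)
    (hα : 0 < α) (hαβ : α < β) (hβ : β < 1) (hsum : α + β < 1)
    (hS0 : S 0 = 0) (hS1 : S 1 = 1) (hScont : Continuous S)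
    (hSmono : StrictMonoOn S (Set.Icc (0:ℝ) 1))
    (hFinv : ∀ p ∈ Set.Icc (0:ℝ) 1, S (Finv p) = p ∧ Finv p ∈ Set.Icc (0:ℝ) 1) :
    (Finv (1 - β + α) - Finv (1 - β - α) < 1) ∧
    ∀ ρ₁ ρ₂ : ℝ, 0 ≤ ρ₁ → ρ₁ < ρ₂ → ρ₂ ≤ 1 →
      0 ≤ (1/α) * (∫ x in (Finv (1 - β - α + α * ρ₂))..(Finv (1 - β + α * ρ₂)), x ∂S.measure)
          - (1/α) * (∫ x in (Finv (1 - β - α + α * ρ₁))..(Finv (1 - β + α * ρ₁)), x ∂S.measure) ∧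
      (1/α) * (∫ x in (Finv (1 - β - α + α * ρ₂))..(Finv (1 - β + α * ρ₂)), x ∂S.measure)
          - (1/α) * (∫ x in (Finv (1 - β - α + α * ρ₁))..(Finv (1 - β + α * ρ₁)), x ∂S.measure)
        ≤ (Finv (1 - β + α) - Finv (1 - β - α)) * (ρ₂ - ρ₁) :=
  fixed_point_update_contraction_general S Finv α β hα hαβ hsum hS0 hS1 hFinv
end

section
/- Let F be a continuous strictly increasing CDF on [0,1] with density f > 0, let α ∈ (0,β), β ∈ (0,1), α+β < 1. Define V(q_b) = ∫_{q_a(q_b)}^{q_b} μ dF + ∫_{q_β(q_b)}^1 μ dF, where q_a(q_b) = F^{-1}(F(q_b) − α) and q_β(q_b) is implicitly defined by ∫_{q_a}^{q_b} μ dF + 1 − F(q_β) = β. Then dV/dq_b = f(q_b)(q_b − q_a)(1 − q_β) > 0 whenever q_b > q_a and q_β < 1; hence V is strictly increasing in q_b. -/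
/-!
Write `q_a(q) = F⁻¹(F q - α)`. By the inverse function rule `q_a' = f(q)/f(q_a)`, so the
screening term `∫_{q_a}^{q} μ f μ` has derivative `q f(q) - q_a f(q_a) q_a' = f(q)(q - q_a)`.
Differentiating the budget constraint gives `f(q_β) q_β' = f(q)(q - q_a)`, hence the
direct-allocation term contributes `-q_β f(q_β) q_β' = -q_β f(q)(q - q_a)`, and the two add up
to `f(q)(q - q_a)(1 - q_β) > 0`. A positive derivative on the convex set `s` gives strict
monotonicity.
-/

open Set Filter Topology

theorem hasDerivAt_integral_of_continuousOn_Icc {g : ℝ → ℝ} {a b c w : ℝ}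
    (hg : ContinuousOn g (Icc a b)) (hc : c ∈ Icc a b) (hw : w ∈ Ioo a b) :
    HasDerivAt (fun x => ∫ t in c..x, g t) (g w) w := by
  have hgw : ContinuousAt g w := hg.continuousAt (Icc_mem_nhds hw.1 hw.2)
  refine intervalIntegral.integral_hasDerivAt_right
    (hg.mono (uIcc_subset_Icc hc (Ioo_subset_Icc_self hw))).intervalIntegrable ?_ hgw
  exact (hg.mono Ioo_subset_Icc_self).stronglyMeasurableAtFilter isOpen_Ioo w hw

theorem HasDerivAt.integral_of_continuousOn_Icc {g u v : ℝ → ℝ} {a b u' v' x : ℝ}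
    (hg : ContinuousOn g (Icc a b)) (hu : HasDerivAt u u' x) (hv : HasDerivAt v v' x)
    (hux : u x ∈ Ioo a b) (hvx : v x ∈ Ioo a b) :
    HasDerivAt (fun y => ∫ t in u y..v y, g t) (g (v x) * v' - g (u x) * u') x := by
  have ha : a ∈ Icc a b := left_mem_Icc.2 (hux.1.trans hux.2).le
  have hprim : ∀ w ∈ Ioo a b, HasDerivAt (fun y => ∫ t in a..y, g t) (g w) w :=
    fun w hw => hasDerivAt_integral_of_continuousOn_Icc hg ha hw
  have hsplit : (fun y => ∫ t in u y..v y, g t)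
      =ᶠ[𝓝 x] fun y => (∫ t in a..v y, g t) - ∫ t in a..u y, g t := by
    filter_upwards [hu.continuousAt.preimage_mem_nhds (Ioo_mem_nhds hux.1 hux.2),
      hv.continuousAt.preimage_mem_nhds (Ioo_mem_nhds hvx.1 hvx.2)] with y huy hvy
    exact (intervalIntegral.integral_interval_sub_left
      (hg.mono (uIcc_subset_Icc ha (Ioo_subset_Icc_self hvy))).intervalIntegrable
      (hg.mono (uIcc_subset_Icc ha (Ioo_subset_Icc_self huy))).intervalIntegrable).symm
  have hdiff := ((hprim _ hvx).scomp x hv).sub ((hprim _ hux).scomp x hu)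
  simp only [smul_eq_mul] at hdiff
  exact (hdiff.congr_of_eventuallyEq hsplit).congr_deriv (by ring)

theorem rightInvOn_mem_Ioo {F G : ℝ → ℝ} {a b p : ℝ} (hF : StrictMonoOn F (Icc a b))
    (hG : ∀ y ∈ Icc (F a) (F b), F (G y) = y ∧ G y ∈ Icc a b) (hp : p ∈ Ioo (F a) (F b)) :
    G p ∈ Ioo a b := by
  obtain ⟨hFGp, hGp⟩ := hG p (Ioo_subset_Icc_self hp)
  have hab : a ≤ b := hGp.1.trans hGp.2
  exact ⟨(hF.lt_iff_lt (left_mem_Icc.2 hab) hGp).1 (by rw [hFGp]; exact hp.1),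
    (hF.lt_iff_lt hGp (right_mem_Icc.2 hab)).1 (by rw [hFGp]; exact hp.2)⟩

theorem hasDerivAt_of_rightInvOn_Icc {F G : ℝ → ℝ} {a b p f' : ℝ}
    (hF : StrictMonoOn F (Icc a b))
    (hG : ∀ y ∈ Icc (F a) (F b), F (G y) = y ∧ G y ∈ Icc a b)
    (hp : p ∈ Ioo (F a) (F b)) (hFG : HasDerivAt F f' (G p)) (hf' : f' ≠ 0) :
    HasDerivAt G f'⁻¹ p := by
  have hGmono : MonotoneOn G (Icc (F a) (F b)) := fun y hy z hz hyz =>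
    (hF.le_iff_le (hG y hy).2 (hG z hz).2).1 (by rw [(hG y hy).1, (hG z hz).1]; exact hyz)
  have hGp := rightInvOn_mem_Ioo hF hG hp
  have hsurj : Icc a b ⊆ G '' Icc (F a) (F b) := fun x hx => by
    have hFx : F x ∈ Icc (F a) (F b) :=
      ⟨hF.monotoneOn (left_mem_Icc.2 (hx.1.trans hx.2)) hx hx.1,
        hF.monotoneOn hx (right_mem_Icc.2 (hx.1.trans hx.2)) hx.2⟩
    exact ⟨F x, hFx, hF.injOn (hG _ hFx).2 hx (hG _ hFx).1⟩
  have hGcont : ContinuousAt G p :=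
    continuousAt_of_monotoneOn_of_image_mem_nhds hGmono (Icc_mem_nhds hp.1 hp.2)
      (mem_of_superset (Icc_mem_nhds hGp.1 hGp.2) hsurj)
  refine hFG.of_local_left_inverse hGcont hf' ?_
  filter_upwards [Icc_mem_nhds hp.1 hp.2] with y hy using (hG y hy).1

theorem hasDerivAt_integral_screeningBand {F G f : ℝ → ℝ} {a b α q : ℝ}
    (hF : StrictMonoOn F (Icc a b)) (hFderiv : ∀ x ∈ Icc a b, HasDerivAt F (f x) x)
    (hfcont : ContinuousOn f (Icc a b)) (hf : ∀ x ∈ Icc a b, f x ≠ 0)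
    (hG : ∀ y ∈ Icc (F a) (F b), F (G y) = y ∧ G y ∈ Icc a b)
    (hq : q ∈ Ioo a b) (hqα : F q - α ∈ Ioo (F a) (F b)) :
    HasDerivAt (fun x => ∫ μ in G (F x - α)..x, μ * f μ) (f q * (q - G (F q - α))) q := by
  have hGp := rightInvOn_mem_Ioo hF hG hqα
  have hGpI := Ioo_subset_Icc_self hGp
  have hlower : HasDerivAt (fun x => G (F x - α)) ((f (G (F q - α)))⁻¹ * f q) q :=
    (hasDerivAt_of_rightInvOn_Icc hF hG hqα (hFderiv _ hGpI) (hf _ hGpI)).comp q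
      ((hFderiv q (Ioo_subset_Icc_self hq)).sub_const α)
  convert hlower.integral_of_continuousOn_Icc (g := fun μ => μ * f μ)
    (continuousOn_id.mul hfcont) (hasDerivAt_id' q) hGp hq using 1
  field_simp [hf _ hGpI]

theorem hasDerivAt_add_integral_of_budget {A qB F f : ℝ → ℝ} {a b c A' qB' q : ℝ}
    (hA : HasDerivAt A A' q) (hqB : HasDerivAt qB qB' q)
    (hF : HasDerivAt F (f (qB q)) (qB q)) (hfcont : ContinuousOn f (Icc a b))
    (hqBq : qB q ∈ Ioo a b) (hbudget : ∀ᶠ x in 𝓝 q, A x - F (qB x) = c) :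
    HasDerivAt (fun x => A x + ∫ μ in qB x..b, μ * f μ) (A' * (1 - qB q)) q := by
  have hslope : A' - f (qB q) * qB' = 0 :=
    (hA.sub (hF.comp q hqB)).unique ((hasDerivAt_const q c).congr_of_eventuallyEq hbudget)
  have hupper :
      HasDerivAt (fun x => ∫ μ in qB x..b, μ * f μ) (-(qB q * f (qB q) * qB')) q := by
    simp_rw [intervalIntegral.integral_symm b]
    exact ((hasDerivAt_integral_of_continuousOn_Icc (continuousOn_id.mul hfcont)
      (right_mem_Icc.2 (hqBq.1.trans hqBq.2).le) hqBq).comp q hqB).neg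
  exact (hA.add hupper).congr_deriv (by linear_combination (qB q) * hslope)

theorem value_increasing_in_upper_band_general
    (F Finv f : ℝ → ℝ) (α β : ℝ) (qB : ℝ → ℝ) (s : Set ℝ)
    (hs : IsOpen s) (hconv : Convex ℝ s)
    (hα : 0 < α)
    (hFderiv : ∀ x ∈ Set.Icc (0:ℝ) 1, HasDerivAt F (f x) x)
    (hfcont : ContinuousOn f (Set.Icc (0:ℝ) 1))
    (hfpos : ∀ x ∈ Set.Icc (0:ℝ) 1, 0 < f x)
    (hF0 : F 0 = 0) (hF1 : F 1 = 1)
    (hFinv : ∀ p ∈ Set.Icc (0:ℝ) 1, F (Finv p) = p ∧ Finv p ∈ Set.Icc (0:ℝ) 1)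
    (hrange : ∀ q ∈ s, q ∈ Set.Icc (0:ℝ) 1 ∧ α ≤ F q ∧
      Finv (F q - α) < q ∧ q ≤ qB q ∧ qB q < 1)
    (hcon : ∀ q ∈ s, (∫ μ in (Finv (F q - α))..q, μ * f μ) + 1 - F (qB q) = β)
    (hqB : DifferentiableOn ℝ qB s) :
    (∀ q ∈ s,
      HasDerivAt (fun q => (∫ μ in (Finv (F q - α))..q, μ * f μ)
          + ∫ μ in (qB q)..1, μ * f μ)
        (f q * (q - Finv (F q - α)) * (1 - qB q)) q ∧
      0 < f q * (q - Finv (F q - α)) * (1 - qB q)) ∧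
    StrictMonoOn (fun q => (∫ μ in (Finv (F q - α))..q, μ * f μ)
        + ∫ μ in (qB q)..1, μ * f μ) s := by
  have hFmono : StrictMonoOn F (Icc 0 1) :=
    strictMonoOn_of_hasDerivWithinAt_pos (convex_Icc 0 1)
      (fun x hx => (hFderiv x hx).continuousAt.continuousWithinAt)
      (fun x hx => (hFderiv x (interior_subset hx)).hasDerivWithinAt)
      (fun x hx => hfpos x (interior_subset hx))
  have hFinvIcc : ∀ p ∈ Icc (F 0) (F 1), F (Finv p) = p ∧ Finv p ∈ Icc 0 1 := by
    rwa [hF0, hF1]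
  have hsIoo : s ⊆ Ioo 0 1 :=
    interior_Icc (a := (0 : ℝ)) (b := 1) ▸ hs.subset_interior_iff.2 fun q hq => (hrange q hq).1
  have hderiv : ∀ q ∈ s, HasDerivAt (fun q => (∫ μ in (Finv (F q - α))..q, μ * f μ)
      + ∫ μ in (qB q)..1, μ * f μ) (f q * (q - Finv (F q - α)) * (1 - qB q)) q := by
    intro q hq
    obtain ⟨hqI, -, -, hqqB, hqB1⟩ := hrange q hq
    -- `F⁻¹` is differentiated at the interior point `F q - α`; `s` open gives `α < F q`.
    obtain ⟨q', hq'q, hq's⟩ := (hs.eventually_mem hq).exists_lt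
    have hαq : α < F q := (hrange q' hq's).2.1.trans_lt (hFmono (hrange q' hq's).1 hqI hq'q)
    have hF1q : F q < F 1 := hFmono hqI (right_mem_Icc.2 zero_le_one) (hsIoo hq).2
    have hA := hasDerivAt_integral_screeningBand (α := α) hFmono hFderiv hfcont
      (fun x hx => (hfpos x hx).ne') hFinvIcc (hsIoo hq) ⟨by linarith, by linarith⟩
    refine hasDerivAt_add_integral_of_budget (c := β - 1) hA
      (hqB.differentiableAt (hs.mem_nhds hq)).hasDerivAt (hFderiv _ ⟨hqI.1.trans hqqB, hqB1.le⟩)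
      hfcont ⟨(hsIoo hq).1.trans_le hqqB, hqB1⟩ ?_
    filter_upwards [hs.mem_nhds hq] with x hx
    linarith [hcon x hx]
  have hpos : ∀ q ∈ s, 0 < f q * (q - Finv (F q - α)) * (1 - qB q) := fun q hq => by
    obtain ⟨hqI, -, hlt, -, hqB1⟩ := hrange q hq
    exact mul_pos (mul_pos (hfpos q hqI) (sub_pos.2 hlt)) (sub_pos.2 hqB1)
  exact ⟨fun q hq => ⟨hderiv q hq, hpos q hq⟩,
    strictMonoOn_of_hasDerivWithinAt_pos hconv
      (fun q hq => (hderiv q hq).continuousAt.continuousWithinAt)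
      (fun q hq => (hderiv q (interior_subset hq)).hasDerivWithinAt)
      (fun q hq => hpos q (interior_subset hq))⟩

/-- Pushing the screening band up improves the objective: with screening band
`[q_a(q_b), q_b]` of `F`-mass `α` (so `q_a(q_b) = F⁻¹(F(q_b) - α)`) and direct
allocation band `[q_β(q_b), 1]` determined by the allocation budget constraint,
the value `V(q_b) = ∫_{q_a}^{q_b} μ dF + ∫_{q_β}^1 μ dF` has derivative
`dV/dq_b = f(q_b)(q_b - q_a)(1 - q_β) > 0`, hence `V` is strictly increasing. -/
theorem value_increasing_in_upper_band
    (F Finv f : ℝ → ℝ) (α β : ℝ) (qB : ℝ → ℝ) (s : Set ℝ)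
    (hs : IsOpen s) (hconv : Convex ℝ s)
    (hα : 0 < α) (hαβ : α < β) (hβ : β < 1) (hsum : α + β < 1)
    (hFderiv : ∀ x ∈ Set.Icc (0:ℝ) 1, HasDerivAt F (f x) x)
    (hfcont : ContinuousOn f (Set.Icc (0:ℝ) 1))
    (hfpos : ∀ x ∈ Set.Icc (0:ℝ) 1, 0 < f x)
    (hF0 : F 0 = 0) (hF1 : F 1 = 1)
    (hFinv : ∀ p ∈ Set.Icc (0:ℝ) 1, F (Finv p) = p ∧ Finv p ∈ Set.Icc (0:ℝ) 1)
    (hrange : ∀ q ∈ s, q ∈ Set.Icc (0:ℝ) 1 ∧ α ≤ F q ∧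
      Finv (F q - α) < q ∧ q ≤ qB q ∧ qB q < 1)
    (hcon : ∀ q ∈ s, (∫ μ in (Finv (F q - α))..q, μ * f μ) + 1 - F (qB q) = β)
    (hqB : DifferentiableOn ℝ qB s) :
    (∀ q ∈ s,
      HasDerivAt (fun q => (∫ μ in (Finv (F q - α))..q, μ * f μ)
          + ∫ μ in (qB q)..1, μ * f μ)
        (f q * (q - Finv (F q - α)) * (1 - qB q)) q ∧
      0 < f q * (q - Finv (F q - α)) * (1 - qB q)) ∧
    StrictMonoOn (fun q => (∫ μ in (Finv (F q - α))..q, μ * f μ)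
        + ∫ μ in (qB q)..1, μ * f μ) s :=
  value_increasing_in_upper_band_general F Finv f α β qB s hs hconv hα hFderiv hfcont hfpos hF0 hF1
    hFinv hrange hcon hqB
end

section
/- Let F be a continuous strictly increasing CDF on [0,1], β ∈ (0,1), α+β < 1, α > 0. Suppose [q_α, q_β] solves F(q_β) − F(q_α) = α and ∫_{q_α}^{q_β} μ dF + 1 − F(q_β) = β, and let q̃_β = F^{-1}(1−β) be the purely algorithmic allocation threshold. Then q_α < q̃_β < q_β. -/
/-! On the band the integrand `x` lies strictly between `0` and `1`, and the band has positive
`F`-mass `α`, so the budget it consumes, `I = ∫_{q_α}^{q_β} x dF`, satisfies `0 < I < α`.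
The budget equation then reads `F(q_β) = 1 - β + I > F(q̃_β)` and
`F(q_α) = 1 - β + I - α < F(q̃_β)`, and monotonicity of `F` gives `q_α < q̃_β < q_β`. -/

open MeasureTheory Set

theorem MeasureTheory.setIntegral_pos_of_forall_pos {X : Type*} [MeasurableSpace X]
    {μ : Measure X} {s : Set X} {f : X → ℝ} (hs : MeasurableSet s) (hμs : μ s ≠ 0)
    (hfi : IntegrableOn f s μ) (hf : ∀ x ∈ s, 0 < f x) : 0 < ∫ x in s, f x ∂μ := by
  rw [setIntegral_pos_iff_support_of_nonneg_ae
    (ae_restrict_of_forall_mem hs fun x hx => (hf x hx).le) hfi,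
    inter_eq_right.mpr fun x hx => Function.mem_support.mpr (hf x hx).ne']
  exact pos_iff_ne_zero.mpr hμs

namespace StieltjesFunction

variable (S : StieltjesFunction ℝ) {a b : ℝ}

theorem measure_Ioc_ne_zero (h : S a < S b) : S.measure (Ioc a b) ≠ 0 := by
  rw [S.measure_Ioc]
  exact (ENNReal.ofReal_pos.mpr (sub_pos.mpr h)).ne'

theorem integrableOn_Ioc_of_continuous {f : ℝ → ℝ} (hf : Continuous f) :
    IntegrableOn f (Ioc a b) S.measure :=
  hf.continuousOn.integrableOn_Icc.mono_set Ioc_subset_Icc_self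

theorem intervalIntegral_id_pos (ha : 0 ≤ a) (h : S a < S b) :
    0 < ∫ x in a..b, x ∂S.measure := by
  rw [intervalIntegral.integral_of_le (S.mono.reflect_lt h).le]
  exact setIntegral_pos_of_forall_pos measurableSet_Ioc (S.measure_Ioc_ne_zero h)
    (S.integrableOn_Ioc_of_continuous continuous_id) fun x hx => ha.trans_lt hx.1

theorem intervalIntegral_id_lt_sub (hb : b < 1) (h : S a < S b) :
    ∫ x in a..b, x ∂S.measure < S b - S a := by
  have hpos : 0 < ∫ x in Ioc a b, (1 - x) ∂S.measure :=
    setIntegral_pos_of_forall_pos measurableSet_Ioc (S.measure_Ioc_ne_zero h)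
      (S.integrableOn_Ioc_of_continuous (continuous_const.sub continuous_id))
      fun x hx => sub_pos.mpr (hx.2.trans_lt hb)
  rw [integral_sub (S.integrableOn_Ioc_of_continuous continuous_const)
    (S.integrableOn_Ioc_of_continuous continuous_id'), setIntegral_const, measureReal_def,
    S.measure_Ioc, ENNReal.toReal_ofReal (sub_pos.mpr h).le, smul_eq_mul, mul_one] at hpos
  rw [intervalIntegral.integral_of_le (S.mono.reflect_lt h).le]
  linarith

end StieltjesFunction

theorem screening_band_straddles_threshold_general
    (S : StieltjesFunction ℝ) (α β qα qβ qt : ℝ)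
    (hα : 0 < α)
    (hqα0 : 0 ≤ qα) (hqβ1 : qβ < 1)
    (hscreen : S qβ - S qα = α)
    (halloc : (∫ x in qα..qβ, x ∂S.measure) + 1 - S qβ = β)
    (hqt : S qt = 1 - β) :
    qα < qt ∧ qt < qβ := by
  have hband : S qα < S qβ := by linarith
  have hbudget_pos := S.intervalIntegral_id_pos hqα0 hband
  have hbudget_lt := S.intervalIntegral_id_lt_sub hqβ1 hband
  exact ⟨S.mono.reflect_lt (by linarith), S.mono.reflect_lt (by linarith)⟩

/-- Screening at the margin of algorithmic allocation: the optimal screening band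
`[q_α, q_β]` (of `F`-mass `α`, exhausting the allocation budget `β` together with
direct allocation above `q_β`) straddles the purely algorithmic threshold
`q̃_β = F⁻¹(1-β)`: `q_α < q̃_β < q_β`. -/
theorem screening_band_straddles_threshold
    (S : StieltjesFunction ℝ) (α β qα qβ qt : ℝ)
    (hα : 0 < α) (hαβ : α < β) (hβ : β < 1) (hsum : α + β < 1)
    (hS0 : S 0 = 0) (hS1 : S 1 = 1) (hScont : Continuous S)
    (hSmono : StrictMonoOn S (Set.Icc (0:ℝ) 1))
    (hqα0 : 0 ≤ qα) (hband : qα ≤ qβ) (hqβ1 : qβ < 1)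
    (hscreen : S qβ - S qα = α)
    (halloc : (∫ x in qα..qβ, x ∂S.measure) + 1 - S qβ = β)
    (hqt : S qt = 1 - β) (hqt01 : qt ∈ Set.Icc (0:ℝ) 1) :
    qα < qt ∧ qt < qβ :=
  screening_band_straddles_threshold_general S α β qα qβ qt hα hqα0 hqβ1 hscreen halloc hqt
end

section
/- Let F be a continuous strictly increasing CDF on [0,1] with density f > 0, let α ∈ (0,β), β ∈ (0,1), α+β < 1. Then there exists a pair (q_α, q_β) with 0 < q_α ≤ q_β < 1 satisfying F(q_β) − F(q_α) = α and ∫_{q_α}^{q_β} μ dF(μ) + 1 − F(q_β) = β, and this pair is unique. -/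
/-!
Parametrise the candidate bands by the value `s ∈ [α, 1]` of `F` at their upper end: the band is
`[G (s - α), G s]` for a continuous inverse `G` of `F`. Its allocation mass exceeds `β` at `s = α`
(because `1 - α > β`) and is at most `α < β` at `s = 1` (because `μ ≤ 1` under the integral), so
the intermediate value theorem yields a band. It is unique because moving a band from `[a₁, b₁]`
up to `[a₂, b₂]` lowers its mass by `∫_{a₁}^{a₂} μ f + ∫_{b₁}^{b₂} (1 - μ) f > 0`.
-/

open Set MeasureTheory

theorem exists_continuous_monotone_rightInvOn_Icc {F : ℝ → ℝ} {a b : ℝ} (hab : a ≤ b)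
    (hF : ContinuousOn F (Icc a b)) (hmono : StrictMonoOn F (Icc a b)) :
    ∃ G : ℝ → ℝ, Continuous G ∧ Monotone G ∧ (∀ y, G y ∈ Icc a b) ∧
      RightInvOn G F (Icc (F a) (F b)) := by
  have hFab : F a ≤ F b := hmono.monotoneOn (left_mem_Icc.2 hab) (right_mem_Icc.2 hab) hab
  let F' : Icc a b → Icc (F a) (F b) := fun x =>
    ⟨F x, hmono.monotoneOn (left_mem_Icc.2 hab) x.2 x.2.1,
      hmono.monotoneOn x.2 (right_mem_Icc.2 hab) x.2.2⟩
  have hF'mono : StrictMono F' := fun x y hxy => hmono x.2 y.2 hxy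
  have hF'surj : Function.Surjective F' := fun y => by
    obtain ⟨x, hx, hxy⟩ := intermediate_value_Icc hab hF y.2
    exact ⟨⟨x, hx⟩, Subtype.ext hxy⟩
  let e := hF'mono.orderIsoOfSurjective F' hF'surj
  refine ⟨fun y => e.symm (projIcc (F a) (F b) hFab y),
    continuous_subtype_val.comp (e.symm.continuous.comp continuous_projIcc),
    fun y z hyz => e.symm.monotone (monotone_projIcc hFab hyz), fun y => (e.symm _).2,
    fun y hy => ?_⟩
  have := congrArg Subtype.val (e.apply_symm_apply (projIcc (F a) (F b) hFab y))
  simp only [projIcc_of_mem hFab hy] at this ⊢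
  exact this

theorem Continuous.intervalIntegral_of_mem_Icc {g u v : ℝ → ℝ} {a b : ℝ}
    (hg : IntegrableOn g (Icc a b)) (hu : Continuous u) (hv : Continuous v)
    (hua : ∀ x, u x ∈ Icc a b) (hva : ∀ x, v x ∈ Icc a b) :
    Continuous fun x => ∫ t in u x..v x, g t := by
  have hab : a ≤ b := (hua 0).1.trans (hua 0).2
  have hint : ∀ {y z}, y ∈ Icc a b → z ∈ Icc a b → IntervalIntegrable g volume y z :=
    fun hy hz => (hg.mono_set (uIcc_subset_Icc hy hz)).intervalIntegrable
  have hprim : ContinuousOn (fun y => ∫ t in a..y, g t) (Icc a b) := by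
    simpa [uIcc_of_le hab] using
      intervalIntegral.continuousOn_primitive_interval (a := a) (b := b) (by rwa [uIcc_of_le hab])
  have hsub : (fun x => ∫ t in u x..v x, g t) =
      fun x => (∫ t in a..v x, g t) - ∫ t in a..u x, g t := by
    ext x
    rw [intervalIntegral.integral_interval_sub_left (hint (left_mem_Icc.2 hab) (hva x))
      (hint (left_mem_Icc.2 hab) (hua x))]
  rw [hsub]
  exact (hprim.comp_continuous hv hva).sub (hprim.comp_continuous hu hua)

theorem strictMonoOn_Icc_of_hasDerivAt_pos {F f : ℝ → ℝ} {a b : ℝ}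
    (hF : ∀ x ∈ Icc a b, HasDerivAt F (f x) x) (hf : ∀ x ∈ Icc a b, 0 < f x) :
    StrictMonoOn F (Icc a b) :=
  strictMonoOn_of_deriv_pos (convex_Icc a b)
    (fun x hx => (hF x hx).continuousAt.continuousWithinAt) fun x hx => by
      rw [interior_Icc] at hx
      rw [(hF x (Ioo_subset_Icc_self hx)).deriv]
      exact hf x (Ioo_subset_Icc_self hx)

noncomputable def allocationMass (F f : ℝ → ℝ) (a b : ℝ) : ℝ :=
  (∫ μ in a..b, μ * f μ) + 1 - F b

section

variable {F f : ℝ → ℝ}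

theorem allocationMass_lt_allocationMass
    (hFderiv : ∀ x ∈ Icc (0:ℝ) 1, HasDerivAt F (f x) x)
    (hfcont : ContinuousOn f (Icc (0:ℝ) 1)) (hfpos : ∀ x ∈ Icc (0:ℝ) 1, 0 < f x)
    {a₁ b₁ a₂ b₂ : ℝ} (ha₁ : a₁ ∈ Icc (0:ℝ) 1) (hb₁ : b₁ ∈ Icc (0:ℝ) 1)
    (ha₂ : a₂ ∈ Icc (0:ℝ) 1) (hb₂ : b₂ ∈ Icc (0:ℝ) 1) (ha : a₁ ≤ a₂) (hb : b₁ < b₂) :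
    allocationMass F f a₂ b₂ < allocationMass F f a₁ b₁ := by
  have hint : ∀ {g : ℝ → ℝ}, ContinuousOn g (Icc 0 1) → ∀ {y z}, y ∈ Icc (0:ℝ) 1 →
      z ∈ Icc (0:ℝ) 1 → IntervalIntegrable g volume y z :=
    fun hg _ _ hy hz => (hg.mono (uIcc_subset_Icc hy hz)).intervalIntegrable
  have hw : ContinuousOn (fun μ => μ * f μ) (Icc 0 1) := continuousOn_id.mul hfcont
  have hlow : 0 ≤ ∫ μ in a₁..a₂, μ * f μ :=
    intervalIntegral.integral_nonneg ha fun μ hμ =>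
      mul_nonneg (ha₁.1.trans hμ.1) (hfpos μ ⟨ha₁.1.trans hμ.1, hμ.2.trans ha₂.2⟩).le
  have hup : 0 < ∫ μ in b₁..b₂, (1 - μ) * f μ :=
    intervalIntegral.intervalIntegral_pos_of_pos_on
      (hint ((continuousOn_const.sub continuousOn_id).mul hfcont) hb₁ hb₂)
      (fun μ hμ => mul_pos (by linarith [hμ.2, hb₂.2])
        (hfpos μ ⟨hb₁.1.trans hμ.1.le, hμ.2.le.trans hb₂.2⟩)) hb
  have hFTC : ∫ μ in b₁..b₂, f μ = F b₂ - F b₁ :=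
    intervalIntegral.integral_eq_sub_of_hasDerivAt
      (fun x hx => hFderiv x (uIcc_subset_Icc hb₁ hb₂ hx)) (hint hfcont hb₁ hb₂)
  have hsplit : ∫ μ in b₁..b₂, (1 - μ) * f μ
      = (∫ μ in b₁..b₂, f μ) - ∫ μ in b₁..b₂, μ * f μ := by
    rw [← intervalIntegral.integral_sub (hint hfcont hb₁ hb₂) (hint hw hb₁ hb₂)]
    simp only [sub_mul, one_mul]
  have h₁ := intervalIntegral.integral_add_adjacent_intervals (hint hw ha₁ ha₂) (hint hw ha₂ hb₁)
  have h₂ := intervalIntegral.integral_add_adjacent_intervals (hint hw ha₂ hb₁) (hint hw hb₁ hb₂)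
  unfold allocationMass
  linarith

theorem eq_of_allocationMass_eq
    (hFderiv : ∀ x ∈ Icc (0:ℝ) 1, HasDerivAt F (f x) x)
    (hfcont : ContinuousOn f (Icc (0:ℝ) 1)) (hfpos : ∀ x ∈ Icc (0:ℝ) 1, 0 < f x)
    {a₁ b₁ a₂ b₂ : ℝ} (ha₁ : a₁ ∈ Icc (0:ℝ) 1) (hb₁ : b₁ ∈ Icc (0:ℝ) 1)
    (ha₂ : a₂ ∈ Icc (0:ℝ) 1) (hb₂ : b₂ ∈ Icc (0:ℝ) 1) (hF : F b₁ - F a₁ = F b₂ - F a₂)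
    (hP : allocationMass F f a₁ b₁ = allocationMass F f a₂ b₂) :
    a₁ = a₂ ∧ b₁ = b₂ := by
  wlog hb : b₁ ≤ b₂ generalizing a₁ b₁ a₂ b₂
  · obtain ⟨ha, hb⟩ := this ha₂ hb₂ ha₁ hb₁ hF.symm hP.symm (le_of_not_ge hb)
    exact ⟨ha.symm, hb.symm⟩
  have hmono := strictMonoOn_Icc_of_hasDerivAt_pos hFderiv hfpos
  obtain rfl : b₁ = b₂ := by
    refine hb.eq_of_not_lt fun hlt => hP.not_gt ?_
    have hFa : F a₁ < F a₂ := by linarith [hmono hb₁ hb₂ hlt]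
    exact allocationMass_lt_allocationMass hFderiv hfcont hfpos ha₁ hb₁ ha₂ hb₂
      ((hmono.lt_iff_lt ha₁ ha₂).1 hFa).le hlt
  exact ⟨hmono.injOn ha₁ ha₂ (by linarith), rfl⟩

theorem integral_id_mul_le_sub_s16
    (hFderiv : ∀ x ∈ Icc (0:ℝ) 1, HasDerivAt F (f x) x)
    (hfcont : ContinuousOn f (Icc (0:ℝ) 1)) (hfnn : ∀ x ∈ Icc (0:ℝ) 1, 0 ≤ f x)
    {u v : ℝ} (hu : u ∈ Icc (0:ℝ) 1) (hv : v ∈ Icc (0:ℝ) 1) (huv : u ≤ v) :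
    ∫ μ in u..v, μ * f μ ≤ F v - F u := by
  have hint : ∀ {g : ℝ → ℝ}, ContinuousOn g (Icc 0 1) → IntervalIntegrable g volume u v :=
    fun hg => (hg.mono (uIcc_subset_Icc hu hv)).intervalIntegrable
  rw [← intervalIntegral.integral_eq_sub_of_hasDerivAt
    (fun x hx => hFderiv x (uIcc_subset_Icc hu hv hx)) (hint hfcont)]
  refine intervalIntegral.integral_mono_on huv (hint (continuousOn_id.mul hfcont))
    (hint hfcont) fun μ hμ => ?_
  have hμ' : μ ∈ Icc (0:ℝ) 1 := ⟨hu.1.trans hμ.1, hμ.2.trans hv.2⟩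
  exact mul_le_of_le_one_left (hfnn μ hμ') hμ'.2

theorem exists_allocationMass_eq
    (hFderiv : ∀ x ∈ Icc (0:ℝ) 1, HasDerivAt F (f x) x)
    (hfcont : ContinuousOn f (Icc (0:ℝ) 1)) (hfpos : ∀ x ∈ Icc (0:ℝ) 1, 0 < f x)
    (hF0 : F 0 = 0) (hF1 : F 1 = 1) {α β : ℝ} (hα : 0 < α) (hαβ : α < β)
    (hsum : α + β < 1) :
    ∃ a b, 0 < a ∧ a ≤ b ∧ b < 1 ∧ F b - F a = α ∧ allocationMass F f a b = β := by
  have hmono := strictMonoOn_Icc_of_hasDerivAt_pos hFderiv hfpos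
  obtain ⟨G, hGc, hGm, hGmem, hGinv⟩ := exists_continuous_monotone_rightInvOn_Icc zero_le_one
    (fun x hx => (hFderiv x hx).continuousAt.continuousWithinAt) hmono
  rw [hF0, hF1] at hGinv
  have hα1 : α < 1 := by linarith
  set h : ℝ → ℝ := fun s => (∫ μ in G (s - α)..G s, μ * f μ) + 1 - s
  have hhc : Continuous h :=
    ((Continuous.intervalIntegral_of_mem_Icc (continuousOn_id.mul hfcont).integrableOn_Icc
      (hGc.comp (continuous_sub_right α)) hGc (fun _ => hGmem _) hGmem).add
        continuous_const).sub continuous_id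
  have hβα : β < h α := by
    have : 0 ≤ ∫ μ in G (α - α)..G α, μ * f μ :=
      intervalIntegral.integral_nonneg (hGm (by linarith)) fun μ hμ =>
        mul_nonneg ((hGmem _).1.trans hμ.1)
          (hfpos μ ⟨(hGmem _).1.trans hμ.1, hμ.2.trans (hGmem _).2⟩).le
    linarith
  have h1β : h 1 < β := by
    have := integral_id_mul_le_sub_s16 hFderiv hfcont (fun x hx => (hfpos x hx).le) (hGmem (1 - α))
      (hGmem 1) (hGm (by linarith))
    rw [hGinv ⟨zero_le_one, le_rfl⟩, hGinv ⟨by linarith, by linarith⟩] at this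
    simp only [h]
    linarith
  obtain ⟨s, hs, hhs⟩ := intermediate_value_Ioo' hα1.le hhc.continuousOn ⟨h1β, hβα⟩
  have hFa : F (G (s - α)) = s - α := hGinv ⟨by linarith [hs.1], by linarith [hs.2]⟩
  have hFb : F (G s) = s := hGinv ⟨by linarith [hs.1], hs.2.le⟩
  refine ⟨G (s - α), G s, ?_, hGm (by linarith), ?_, by linarith, ?_⟩
  · refine (hmono.lt_iff_lt ⟨le_rfl, zero_le_one⟩ (hGmem _)).1 ?_
    rw [hF0, hFa]
    linarith [hs.1]
  · refine (hmono.lt_iff_lt (hGmem _) ⟨zero_le_one, le_rfl⟩).1 ?_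
    rw [hF1, hFb]
    exact hs.2
  · rw [allocationMass, hFb]
    exact hhs

end

theorem screening_band_exists_unique_general
    (F f : ℝ → ℝ) (α β : ℝ)
    (hα : 0 < α) (hαβ : α < β) (hsum : α + β < 1)
    (hFderiv : ∀ x ∈ Set.Icc (0:ℝ) 1, HasDerivAt F (f x) x)
    (hfcont : ContinuousOn f (Set.Icc (0:ℝ) 1))
    (hfpos : ∀ x ∈ Set.Icc (0:ℝ) 1, 0 < f x)
    (hF0 : F 0 = 0) (hF1 : F 1 = 1) :
    ∃! p : ℝ × ℝ,
      0 < p.1 ∧ p.1 ≤ p.2 ∧ p.2 < 1 ∧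
      F p.2 - F p.1 = α ∧
      (∫ μ in p.1..p.2, μ * f μ) + 1 - F p.2 = β := by
  obtain ⟨a, b, ha, hab, hb, hFα, hPβ⟩ :=
    exists_allocationMass_eq hFderiv hfcont hfpos hF0 hF1 hα hαβ hsum
  refine ⟨(a, b), ⟨ha, hab, hb, hFα, hPβ⟩, ?_⟩
  rintro ⟨a', b'⟩ ⟨ha', hab', hb', hFα', hPβ'⟩
  obtain ⟨rfl, rfl⟩ := eq_of_allocationMass_eq hFderiv hfcont hfpos
    ⟨ha'.le, by linarith⟩ ⟨by linarith, hb'.le⟩ ⟨ha.le, by linarith⟩ ⟨by linarith, hb.le⟩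
    (hFα'.trans hFα.symm) (hPβ'.trans hPβ.symm)
  rfl

/-- Existence and uniqueness of the optimal screening band: for a continuous strictly
increasing CDF `F` on `[0,1]` with density `f > 0` and budgets `0 < α < β < 1` with
`α + β < 1`, there is a unique pair `0 < q_α ≤ q_β < 1` with `F(q_β) - F(q_α) = α`
and `∫_{q_α}^{q_β} μ dF + 1 - F(q_β) = β`. -/
theorem screening_band_exists_unique
    (F f : ℝ → ℝ) (α β : ℝ)
    (hα : 0 < α) (hαβ : α < β) (hβ : β < 1) (hsum : α + β < 1)
    (hFderiv : ∀ x ∈ Set.Icc (0:ℝ) 1, HasDerivAt F (f x) x)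
    (hfcont : ContinuousOn f (Set.Icc (0:ℝ) 1))
    (hfpos : ∀ x ∈ Set.Icc (0:ℝ) 1, 0 < f x)
    (hF0 : F 0 = 0) (hF1 : F 1 = 1) :
    ∃! p : ℝ × ℝ,
      0 < p.1 ∧ p.1 ≤ p.2 ∧ p.2 < 1 ∧
      F p.2 - F p.1 = α ∧
      (∫ μ in p.1..p.2, μ * f μ) + 1 - F p.2 = β :=
  screening_band_exists_unique_general F f α β hα hαβ hsum hFderiv hfcont hfpos hF0 hF1
end
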